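/- For q ≥ 5, n a positive divisor of q, p = q/n, and κ = x/z ∈ ℚ ∪ {∞} with gcd(x,z) = 1 (with ∞ = 1/0), the cusp width of κ with respect to Γ_q^n equals q/gcd(p, z), where gcd(p,0) := p. In particular this fails for q = 4: W_{Γ_4^1}(1/2) = 1 ≠ 2. -/

import Mathlib

open Matrix CongruenceSubgroup

local notation "SL2Z" => Matrix.SpecialLinearGroup (Fin 2) ℤ

/-- `±Γ` : the subgroup generated by `Γ` and `-1`. -/
def pm (Γ : Subgroup SL2Z) : Subgroup SL2Z := Γ ⊔ Subgroup.zpowers (-1)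

/-- Matrices in `SL(2, ℤ)` whose upper-right entry is divisible by `n`. -/
def GammaUpper (n : ℕ) : Subgroup SL2Z where
  carrier := { g | ((g 0 1 : ℤ) : ZMod n) = 0 }
  one_mem' := by simp
  mul_mem' := by
    intro a b ha hb
    have h := (Matrix.two_mul_expl a.1 b.1).2.1
    simp only [Set.mem_setOf_eq] at *
    rw [Matrix.SpecialLinearGroup.coe_mul, h]
    push_cast
    rw [ha, hb]
    ring
  inv_mem' := by
    intro a ha
    simp only [Set.mem_setOf_eq] at *
    rw [Matrix.SpecialLinearGroup.SL2_inv_expl a]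
    simp [ha]

/-- The group `Γ_q^n`: `a ≡ d ≡ 1, c ≡ 0 (mod q)` and `b ≡ 0 (mod n)`. -/
def GammaQN (q n : ℕ) : Subgroup SL2Z := Gamma1 q ⊓ GammaUpper n

/-- The Möbius action of `SL(2, ℤ)` on `ℚ ∪ {∞}`, with `∞` encoded as `none`. -/
def moebius (g : Matrix.SpecialLinearGroup (Fin 2) ℤ) (x : Option ℚ) : Option ℚ :=
  match x with
  | none => if ((g.1 1 0 : ℤ) : ℚ) = 0 then none
      else some (((g.1 0 0 : ℤ) : ℚ) / ((g.1 1 0 : ℤ) : ℚ))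
  | some t => if ((g.1 1 0 : ℤ) : ℚ) * t + ((g.1 1 1 : ℤ) : ℚ) = 0 then none
      else some ((((g.1 0 0 : ℤ) : ℚ) * t + ((g.1 0 1 : ℤ) : ℚ)) /
        (((g.1 1 0 : ℤ) : ℚ) * t + ((g.1 1 1 : ℤ) : ℚ)))

/-- Two cusps are `Γ`-equivalent if some element of `Γ` maps one to the other. -/
def cuspRel (G : Subgroup (Matrix.SpecialLinearGroup (Fin 2) ℤ)) (x y : Option ℚ) : Prop :=
  ∃ γ ∈ G, moebius γ x = y

/-- The number of cusps of `Γ`, i.e. the number of `Γ`-orbits on `ℚ ∪ {∞}`. -/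
noncomputable def numCusps (G : Subgroup (Matrix.SpecialLinearGroup (Fin 2) ℤ)) : ℕ :=
  Nat.card (Quot (cuspRel G))

/-- `IsWidth Γ κ R` : `R` is the cusp width of `κ` with respect to `Γ`, i.e. for any
`N ∈ SL(2, ℤ)` with `N∞ = κ`, the elements of `N⁻¹(Γ ∪ -Γ)N` fixing `∞` are exactly
`±(1, mR; 0, 1)`, `m ∈ ℤ`. -/
def IsWidth (G : Subgroup (Matrix.SpecialLinearGroup (Fin 2) ℤ)) (κ : Option ℚ) (R : ℕ) :
    Prop :=
  0 < R ∧ ∀ N : Matrix.SpecialLinearGroup (Fin 2) ℤ, moebius N none = κ →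
    {M : Matrix.SpecialLinearGroup (Fin 2) ℤ |
        (N * M * N⁻¹ ∈ G ∨ -(N * M * N⁻¹) ∈ G) ∧ moebius M none = none}
      = {M : Matrix.SpecialLinearGroup (Fin 2) ℤ |
          ∃ m : ℤ, M = ModularGroup.T ^ (m * R) ∨ M = -(ModularGroup.T ^ (m * R))}


/-! The stabiliser of `∞` in `SL(2, ℤ)` is `{±T^k}`, so for `N = (a b; c d)` with `N∞ = κ` the width
is the `R > 0` such that `±N T^k N⁻¹ ∈ Γ_q^n` exactly when `R ∣ k`. Here
`N T^k N⁻¹ = (1 - kac, ka²; -kc², 1 + kac)` has trace `2`, so its negative lies in `Γ₁(q)` only if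
`q ∣ 4`; and since `a, c` are coprime, `N T^k N⁻¹ ∈ Γ_q^n` iff `q ∣ kc` and `n ∣ k`, i.e. iff
`q / gcd(p, c) ∣ k`. Finally `|c| = |z|`. For `q = 4` and `c = ±2` one has `kac ≡ 0` or `2 (mod 4)`,
so one of `±N T^k N⁻¹` always lies in `Γ_4^1` and the width of `1/2` drops to `1`. -/

open ModularGroup

lemma det_fin_two_eq_one (N : SL2Z) : N 0 0 * N 1 1 - N 0 1 * N 1 0 = 1 := by
  rw [← Matrix.det_fin_two]
  exact N.det_coe

lemma isCoprime_left_column (N : SL2Z) : IsCoprime (N 0 0) (N 1 0) :=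
  ⟨N 1 1, -N 0 1, by linear_combination det_fin_two_eq_one N⟩

lemma eq_T_zpow_or_eq_neg_T_zpow_of_c_eq_zero {M : SL2Z} (h : M 1 0 = 0) :
    ∃ k : ℤ, M = T ^ k ∨ M = -T ^ k := by
  have had : M 0 0 * M 1 1 = 1 := by simpa [h] using det_fin_two_eq_one M
  rcases Int.eq_one_or_neg_one_of_mul_eq_one' had with ⟨ha, hd⟩ | ⟨ha, hd⟩
  · refine ⟨M 0 1, Or.inl ?_⟩
    ext i j; fin_cases i <;> fin_cases j <;> simp [ha, hd, h, coe_T_zpow]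
  · refine ⟨-M 0 1, Or.inr ?_⟩
    ext i j; fin_cases i <;> fin_cases j <;> simp [ha, hd, h, coe_T_zpow]

lemma T_zpow_eq_T_zpow_iff {j k : ℤ} : T ^ j = T ^ k ↔ j = k := by
  refine ⟨fun h => ?_, fun h => h ▸ rfl⟩
  simpa [coe_T_zpow] using congrArg (fun g : SL2Z => g 0 1) h

lemma T_zpow_ne_neg_T_zpow (j k : ℤ) : T ^ j ≠ -T ^ k := fun h => by
  simpa [coe_T_zpow] using congrArg (fun g : SL2Z => g 0 0) h

lemma exists_T_zpow_mul_eq_iff_dvd (k : ℤ) (R : ℕ) :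
    (∃ m : ℤ, T ^ k = T ^ (m * R) ∨ T ^ k = -T ^ (m * R)) ↔ (R : ℤ) ∣ k := by
  simp only [T_zpow_ne_neg_T_zpow, or_false, T_zpow_eq_T_zpow_iff]
  exact ⟨fun ⟨m, hm⟩ => ⟨m, by rw [hm, mul_comm]⟩, fun ⟨m, hm⟩ => ⟨m, by rw [hm, mul_comm]⟩⟩

lemma coe_conj_T_zpow (N : SL2Z) (k : ℤ) :
    ((N * T ^ k * N⁻¹ : SL2Z) : Matrix (Fin 2) (Fin 2) ℤ) =
      !![1 - k * N 0 0 * N 1 0, k * N 0 0 ^ 2; -(k * N 1 0 ^ 2), 1 + k * N 0 0 * N 1 0] := by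
  have hdet := det_fin_two_eq_one N
  rw [Matrix.SpecialLinearGroup.coe_mul, Matrix.SpecialLinearGroup.coe_mul,
    Matrix.SpecialLinearGroup.coe_inv, Matrix.adjugate_fin_two, coe_T_zpow,
    Matrix.eta_fin_two ⇑N]
  ext i j; fin_cases i <;> fin_cases j <;> simp <;> first | ring1 | linear_combination hdet

lemma trace_conj_T_zpow (N : SL2Z) (k : ℤ) :
    ((N * T ^ k * N⁻¹ : SL2Z) : Matrix (Fin 2) (Fin 2) ℤ).trace = 2 := by
  rw [coe_conj_T_zpow, Matrix.trace_fin_two_of]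
  ring

lemma moebius_none_eq_none_iff (M : SL2Z) : moebius M none = none ↔ M 1 0 = 0 := by
  simp [moebius]

lemma natAbs_c_eq_of_moebius_none_eq {N : SL2Z} {x z : ℤ} (hxz : IsCoprime x z)
    (h : moebius N none = if z = 0 then none else some ((x : ℚ) / (z : ℚ))) :
    (N 1 0).natAbs = z.natAbs := by
  by_cases hz : z = 0
  · rw [if_pos hz, moebius_none_eq_none_iff] at h
    rw [h, hz]
  · rw [if_neg hz] at h
    have hc : N 1 0 ≠ 0 := by
      rw [Ne, ← moebius_none_eq_none_iff, h]
      exact Option.some_ne_none _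
    simp only [moebius, Int.cast_eq_zero, hc, if_false, Option.some_inj] at h
    have hcross : N 0 0 * z = x * N 1 0 := by
      rw [div_eq_div_iff (by exact_mod_cast hc) (by exact_mod_cast hz)] at h
      exact_mod_cast h
    refine Int.natAbs_eq_of_dvd_dvd ?_ ?_
    · exact (isCoprime_left_column N).symm.dvd_of_dvd_mul_left ⟨x, by linear_combination hcross⟩
    · exact hxz.symm.dvd_of_dvd_mul_left ⟨N 0 0, by linear_combination -hcross⟩

lemma isWidth_iff {G : Subgroup SL2Z} {κ : Option ℚ} {R : ℕ} :
    IsWidth G κ R ↔ 0 < R ∧ ∀ N : SL2Z, moebius N none = κ → ∀ k : ℤ,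
      (N * T ^ k * N⁻¹ ∈ G ∨ -(N * T ^ k * N⁻¹) ∈ G) ↔ (R : ℤ) ∣ k := by
  refine and_congr_right fun _ => forall₂_congr fun N _ => ?_
  have hneg (M : SL2Z) : (N * -M * N⁻¹ ∈ G ∨ -(N * -M * N⁻¹) ∈ G) ↔
      (N * M * N⁻¹ ∈ G ∨ -(N * M * N⁻¹) ∈ G) := by
    rw [mul_neg, neg_mul, neg_neg, or_comm]
  have hT (k : ℤ) : (T ^ k) 1 0 = 0 := by
    rw [coe_T_zpow]; rfl
  simp only [moebius_none_eq_none_iff]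
  constructor
  · intro h k
    have hk := Set.ext_iff.1 h (T ^ k)
    simp only [Set.mem_ofPred_eq, hT, and_true] at hk
    rw [hk, exists_T_zpow_mul_eq_iff_dvd]
  · intro h
    ext M
    simp only [Set.mem_ofPred_eq]
    constructor
    · rintro ⟨hM, hM10⟩
      obtain ⟨k, rfl | rfl⟩ := eq_T_zpow_or_eq_neg_T_zpow_of_c_eq_zero hM10
      · obtain ⟨m, rfl⟩ := (h k).1 hM
        exact ⟨m, Or.inl (by rw [mul_comm])⟩
      · obtain ⟨m, rfl⟩ := (h k).1 ((hneg _).1 hM)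
        exact ⟨m, Or.inr (by rw [mul_comm])⟩
    · rintro ⟨m, rfl | rfl⟩
      · exact ⟨(h _).2 (dvd_mul_left _ _), hT _⟩
      · refine ⟨(hneg _).2 ((h _).2 (dvd_mul_left _ _)), ?_⟩
        simpa using hT (m * R)

lemma Gamma1_mem_iff_dvd (q : ℕ) (A : SL2Z) :
    A ∈ Gamma1 q ↔ (q : ℤ) ∣ A 0 0 - 1 ∧ (q : ℤ) ∣ A 1 1 - 1 ∧ (q : ℤ) ∣ A 1 0 := by
  simp only [Gamma1_mem, ← ZMod.intCast_zmod_eq_zero_iff_dvd, Int.cast_sub, Int.cast_one,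
    sub_eq_zero]

lemma mem_GammaQN_iff (q n : ℕ) (A : SL2Z) :
    A ∈ GammaQN q n ↔ A ∈ Gamma1 q ∧ (n : ℤ) ∣ A 0 1 :=
  Subgroup.mem_inf.trans <| and_congr_right fun _ => ZMod.intCast_zmod_eq_zero_iff_dvd _ _

lemma dvd_four_of_neg_mem_Gamma1 {q : ℕ} {A : SL2Z}
    (htr : (A : Matrix (Fin 2) (Fin 2) ℤ).trace = 2) (h : -A ∈ Gamma1 q) : (q : ℤ) ∣ 4 := by
  rw [Matrix.trace_fin_two] at htr
  obtain ⟨h00, h11, -⟩ := (Gamma1_mem_iff_dvd q _).1 h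
  simp only [Matrix.SpecialLinearGroup.coe_neg, Matrix.neg_apply] at h00 h11
  have := dvd_neg.2 (dvd_add h00 h11)
  rwa [show -(-A 0 0 - 1 + (-A 1 1 - 1)) = (4 : ℤ) by linear_combination htr] at this

lemma conj_T_zpow_mem_GammaQN_iff {q n : ℕ} (hnq : n ∣ q) (N : SL2Z) (k : ℤ) :
    N * T ^ k * N⁻¹ ∈ GammaQN q n ↔ (q : ℤ) ∣ k * N 1 0 ∧ (n : ℤ) ∣ k := by
  have hnq : (n : ℤ) ∣ q := Int.natCast_dvd_natCast.2 hnq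
  simp only [mem_GammaQN_iff, Gamma1_mem_iff_dvd, coe_conj_T_zpow, Matrix.of_apply,
    Matrix.cons_val', Matrix.cons_val_zero, Matrix.cons_val_one, Matrix.empty_val',
    Matrix.cons_val_fin_one]
  rw [show 1 - k * N 0 0 * N 1 0 - 1 = -(k * N 1 0 * N 0 0) by ring,
    show 1 + k * N 0 0 * N 1 0 - 1 = k * N 1 0 * N 0 0 by ring,
    show k * N 1 0 ^ 2 = k * N 1 0 * N 1 0 by ring, dvd_neg, dvd_neg]
  constructor
  · rintro ⟨⟨hkca, -, hkcc⟩, hkaa⟩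
    obtain ⟨u, v, huv⟩ := isCoprime_left_column N
    obtain ⟨u', v', huv'⟩ := (isCoprime_left_column N).pow (m := 2) (n := 2)
    refine ⟨?_, ?_⟩
    · rw [show k * N 1 0 = u * (k * N 1 0 * N 0 0) + v * (k * N 1 0 * N 1 0) by
        linear_combination (-(k * N 1 0)) * huv]
      exact dvd_add (hkca.mul_left u) (hkcc.mul_left v)
    · rw [show k = u' * (k * N 0 0 ^ 2) + v' * (k * N 1 0 * N 1 0) by
        linear_combination (-k) * huv']
      exact dvd_add (hkaa.mul_left u') ((hnq.trans hkcc).mul_left v')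
  · rintro ⟨hkc, hk⟩
    exact ⟨⟨hkc.mul_right _, hkc.mul_right _, hkc.mul_right _⟩, hk.mul_right _⟩

lemma natCast_dvd_mul_and_dvd_iff {q n : ℕ} (hq : q ≠ 0) (hnq : n ∣ q) (k c : ℤ) :
    (q : ℤ) ∣ k * c ∧ (n : ℤ) ∣ k ↔ ((q / Nat.gcd (q / n) c.natAbs : ℕ) : ℤ) ∣ k := by
  obtain ⟨p, rfl⟩ := hnq
  have hn : n ≠ 0 := left_ne_zero_of_mul hq
  have hp : p ≠ 0 := right_ne_zero_of_mul hq
  set g := Nat.gcd p c.natAbs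
  have hgp : g ∣ p := Nat.gcd_dvd_left _ _
  rw [Nat.mul_div_cancel_left _ (Nat.pos_of_ne_zero hn), Nat.mul_div_assoc _ hgp, Nat.cast_mul,
    Nat.cast_mul]
  constructor
  · rintro ⟨hkc, k', rfl⟩
    refine mul_dvd_mul_left _ ?_
    have hpk : (p : ℤ) ∣ k' * c := by
      rw [mul_assoc] at hkc
      exact (mul_dvd_mul_iff_left (by exact_mod_cast hn)).1 hkc
    have := Int.ModEq.cancel_right_div_gcd (by exact_mod_cast Nat.pos_of_ne_zero hp)
      (show k' * c ≡ 0 * c [ZMOD p] from (Int.modEq_zero_iff_dvd.2 hpk).trans (by simp))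
    exact_mod_cast Int.modEq_zero_iff_dvd.1 this
  · rintro ⟨m, rfl⟩
    have hpg : ((p / g : ℕ) : ℤ) * g = p := by exact_mod_cast Nat.div_mul_cancel hgp
    obtain ⟨c', hc'⟩ : (g : ℤ) ∣ c := Int.natCast_dvd.2 (Nat.gcd_dvd_right _ _)
    refine ⟨⟨m * c', ?_⟩, dvd_mul_of_dvd_left (dvd_mul_right _ _) _⟩
    linear_combination (n * (p / g : ℕ) * m : ℤ) * hc' + (n * m * c' : ℤ) * hpg

theorem isWidth_GammaQN {q n : ℕ} (hq : 0 < q) (hq4 : ¬ q ∣ 4) (hnq : n ∣ q) {κ : Option ℚ}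
    {c : ℕ} (hκ : ∀ N : SL2Z, moebius N none = κ → (N 1 0).natAbs = c) :
    IsWidth (GammaQN q n) κ (q / Nat.gcd (q / n) c) := by
  have hqn : 0 < q / n := Nat.div_pos (Nat.le_of_dvd hq hnq) (Nat.pos_of_dvd_of_pos hnq hq)
  have hgq : Nat.gcd (q / n) c ≤ q :=
    Nat.le_of_dvd hq ((Nat.gcd_dvd_left _ _).trans (Nat.div_dvd_of_dvd hnq))
  refine isWidth_iff.2 ⟨Nat.div_pos hgq (Nat.gcd_pos_of_pos_left _ hqn), fun N hN k => ?_⟩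
  have hneg : -(N * T ^ k * N⁻¹) ∉ GammaQN q n := fun h =>
    hq4 (Int.natCast_dvd_natCast.1
      (dvd_four_of_neg_mem_Gamma1 (trace_conj_T_zpow N k) (Subgroup.mem_inf.1 h).1))
  rw [or_iff_left hneg, conj_T_zpow_mem_GammaQN_iff hnq, ← hκ N hN]
  exact natCast_dvd_mul_and_dvd_iff hq.ne' hnq k (N 1 0)

lemma conj_T_zpow_mem_or_neg_mem_GammaQN_four_one {N : SL2Z} (hN : (N 1 0).natAbs = 2)
    (k : ℤ) : N * T ^ k * N⁻¹ ∈ GammaQN 4 1 ∨ -(N * T ^ k * N⁻¹) ∈ GammaQN 4 1 := by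
  simp only [mem_GammaQN_iff, Gamma1_mem_iff_dvd, Matrix.SpecialLinearGroup.coe_neg,
    Matrix.neg_apply, coe_conj_T_zpow, Matrix.of_apply, Matrix.cons_val', Matrix.cons_val_zero,
    Matrix.cons_val_one, Matrix.empty_val', Matrix.cons_val_fin_one, Nat.cast_one, one_dvd,
    and_true]
  have hc2 : N 1 0 ^ 2 = 4 := by rw [← Int.natAbs_sq, hN]; rfl
  obtain hc | hc := Int.natAbs_eq_iff.1 hN <;> rw [hc2, hc] <;> generalize k * N 0 0 = s <;> omega

theorem stmt19 :
    (∀ q n : ℕ, 5 ≤ q → 0 < n → n ∣ q → ∀ x z : ℤ, IsCoprime x z →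
      IsWidth (GammaQN q n) (if z = 0 then none else some ((x : ℚ) / (z : ℚ)))
        (q / Nat.gcd (q / n) z.natAbs)) ∧
    IsWidth (GammaQN 4 1) (some ((1 : ℚ) / 2)) 1 ∧
    ¬ IsWidth (GammaQN 4 1) (some ((1 : ℚ) / 2)) 2 := by
  have c_of_half (N : SL2Z) (hN : moebius N none = some ((1 : ℚ) / 2)) : (N 1 0).natAbs = 2 :=
    natAbs_c_eq_of_moebius_none_eq (x := 1) (z := 2) isCoprime_one_left (by rw [hN]; norm_num)
  refine ⟨fun q n hq _ hnq x z hxz => ?_, ?_, fun h => ?_⟩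
  · refine isWidth_GammaQN (by omega) (fun h4 => ?_) hnq
      fun N hN => natAbs_c_eq_of_moebius_none_eq hxz hN
    have := Nat.le_of_dvd (by norm_num) h4
    omega
  · refine isWidth_iff.2 ⟨one_pos, fun N hN k => ⟨fun _ => one_dvd k, fun _ => ?_⟩⟩
    exact conj_T_zpow_mem_or_neg_mem_GammaQN_four_one (c_of_half N hN) k
  · let N : SL2Z := ⟨!![1, 0; 2, 1], by norm_num [Matrix.det_fin_two_of]⟩
    have hN : moebius N none = some ((1 : ℚ) / 2) := by norm_num [N, moebius]
    have h1 := ((isWidth_iff.1 h).2 N hN 1).1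
      (conj_T_zpow_mem_or_neg_mem_GammaQN_four_one (c_of_half N hN) 1)
    norm_num at h1
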